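/- arXiv:1605.02615 — 4 statements merged into one kernel-verified Lean document; each statement's English description precedes it below -/
import Mathlib

section
/- Equivalence of the two distance measures on the constraint set: Let ρ ∈ (0,1) and assume d* ∈ C_ρ. Then for every ξ ∈ ℝⁿ and every γ ∈ C_ρ, (1−ρ) Δ(ξ,γ) ≤ Δ_F(ξ,γ) ≤ (1+2ρ) Δ(ξ,γ). -/
noncomputable section
open scoped BigOperators

/-- squared Euclidean norm ‖v‖₂² -/
def enormSq {n : ℕ} (v : Fin n → ℝ) : ℝ := ∑ j, v j ^ 2

/-- squared Frobenius norm ‖M‖_F² -/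
def frobSq {n m : ℕ} (M : Matrix (Fin n) (Fin m) ℝ) : ℝ := ∑ i, ∑ j, M i j ^ 2

/-- ‖d‖₁ = Σᵢ dᵢ for a positive vector d -/
def dOne {m : ℕ} (d : Fin m → ℝ) : ℝ := ∑ i, d i

/-- x* = (‖d‖₁/m) x -/
def xStar {n m : ℕ} (x : Fin n → ℝ) (d : Fin m → ℝ) : Fin n → ℝ :=
  fun j => (dOne d / m) * x j

/-- d* = (m/‖d‖₁) d -/
def dStar {m : ℕ} (d : Fin m → ℝ) : Fin m → ℝ := fun i => ((m : ℝ) / dOne d) * d i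

/-- the distance Δ(ξ,γ) = ‖ξ−x*‖₂² + (‖x*‖₂²/m)‖γ−d*‖₂² -/
def DeltaDist {n m : ℕ} (x : Fin n → ℝ) (d : Fin m → ℝ) (ξ : Fin n → ℝ) (γ : Fin m → ℝ) : ℝ :=
  enormSq (ξ - xStar x d) + (enormSq (xStar x d) / m) * enormSq (γ - dStar d)

/-- the pre-metric Δ_F(ξ,γ) = (1/m)‖ξγᵀ − x dᵀ‖_F² -/
def DeltaF {n m : ℕ} (x : Fin n → ℝ) (d : Fin m → ℝ) (ξ : Fin n → ℝ) (γ : Fin m → ℝ) : ℝ :=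
  (m : ℝ)⁻¹ * frobSq (Matrix.vecMulVec ξ γ - Matrix.vecMulVec x d)

/-- the constraint set C_ρ = {1_m + e : e ∈ 1⊥_m, ‖e‖_∞ ≤ ρ} -/
def Cset (m : ℕ) (ρ : ℝ) : Set (Fin m → ℝ) :=
  {γ | (∑ i, γ i) = m ∧ ∀ i, |γ i - 1| ≤ ρ}

set_option maxHeartbeats 1000000 in
/-- **Equivalence of the two distance measures on the constraint set.**
Let ρ ∈ (0,1) and assume d* ∈ C_ρ.  Then for every ξ ∈ ℝⁿ and every γ ∈ C_ρ,
(1−ρ) Δ(ξ,γ) ≤ Δ_F(ξ,γ) ≤ (1+2ρ) Δ(ξ,γ). -/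
theorem distance_equivalence {n m : ℕ} (hn : 0 < n) (hm : 0 < m)
    (x : Fin n → ℝ) (d : Fin m → ℝ) (hd : ∀ i, 0 < d i)
    (ρ : ℝ) (hρ : ρ ∈ Set.Ioo (0 : ℝ) 1) (hdstar : dStar d ∈ Cset m ρ)
    (ξ : Fin n → ℝ) (γ : Fin m → ℝ) (hγ : γ ∈ Cset m ρ) :
    (1 - ρ) * DeltaDist x d ξ γ ≤ DeltaF x d ξ γ ∧
      DeltaF x d ξ γ ≤ (1 + 2 * ρ) * DeltaDist x d ξ γ := by
  obtain ⟨hρ0, hρ1⟩ := hρ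
  have hm' : (0:ℝ) < m := by exact_mod_cast hm
  have hdOne : 0 < dOne d := Finset.sum_pos (fun i _ => hd i) ⟨⟨0, hm⟩, Finset.mem_univ _⟩
  set b : Fin n → ℝ := xStar x d with hb
  set u : Fin n → ℝ := fun j => ξ j - b j with hu
  set v : Fin m → ℝ := fun i => γ i - dStar d i with hv
  set A := ∑ j, u j ^ 2 with hA
  set B := ∑ j, b j ^ 2 with hB
  set V := ∑ i, v i ^ 2 with hV
  set P := ∑ j, u j * b j with hP
  set Q := ∑ i, (γ i - 1) * v i with hQ
  set E := ∑ i, (γ i - 1) ^ 2 with hE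
  have hsumd : (∑ i, dStar d i) = m := hdstar.1
  have hsumγ : (∑ i, γ i) = m := hγ.1
  have hsumv : (∑ i, v i) = 0 := by
    simp only [hv, Finset.sum_sub_distrib, hsumγ, hsumd, sub_self]
  -- sum of γ i * v i equals Q
  have hQγ : (∑ i, γ i * v i) = Q := by
    have : ∀ i, γ i * v i = (γ i - 1) * v i + v i := fun i => by ring
    simp only [this, Finset.sum_add_distrib, hsumv, add_zero, hQ]
  -- sum of γ² equals E + m
  have hS : (∑ i, γ i ^ 2) = E + m := by
    have : ∀ i, (γ i - 1)^2 = γ i ^2 - 2 * γ i + 1 := fun i => by ring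
    simp only [hE, this, Finset.sum_add_distrib, Finset.sum_sub_distrib,
      ← Finset.mul_sum, hsumγ, Finset.sum_const, Finset.card_univ, Fintype.card_fin,
      nsmul_eq_mul, mul_one]
    ring
  -- entrywise identity
  have hentry : ∀ (i : Fin n) (j : Fin m),
      ξ i * γ j - x i * d j = u i * γ j + b i * v j := by
    intro i j
    have hx : x i * d j = b i * dStar d j := by
      simp only [hb, xStar, dStar]
      field_simp
    simp only [hu, hv]
    rw [hx]; ring
  -- Frobenius expansion
  have hfrob : frobSq (Matrix.vecMulVec ξ γ - Matrix.vecMulVec x d)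
      = A * (E + m) + 2 * P * Q + B * V := by
    have hrow : ∀ i : Fin n, (∑ j, (u i * γ j + b i * v j)^2)
        = u i ^2 * (E + m) + (u i * b i) * (2 * Q) + b i ^2 * V := by
      intro i
      have expand : ∀ j, (u i * γ j + b i * v j)^2
          = u i ^2 * γ j ^2 + (u i * b i) * (2 * (γ j * v j)) + b i ^2 * v j ^2 :=
        fun j => by ring
      rw [Finset.sum_congr rfl (fun j _ => expand j)]
      rw [Finset.sum_add_distrib, Finset.sum_add_distrib,
        ← Finset.mul_sum, ← Finset.mul_sum, ← Finset.mul_sum, hS, hQγ]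
      rw [← Finset.mul_sum]
    have : frobSq (Matrix.vecMulVec ξ γ - Matrix.vecMulVec x d)
        = ∑ i, ∑ j, (u i * γ j + b i * v j)^2 := by
      unfold frobSq
      refine Finset.sum_congr rfl (fun i _ => Finset.sum_congr rfl (fun j _ => ?_))
      simp only [Matrix.sub_apply, Matrix.vecMulVec_apply, hentry i j]
    rw [this, Finset.sum_congr rfl (fun i _ => hrow i)]
    rw [Finset.sum_add_distrib, Finset.sum_add_distrib,
      ← Finset.sum_mul, ← Finset.sum_mul, ← Finset.sum_mul]
    ring
  have hDF : DeltaF x d ξ γ = (A * (E + m) + 2 * P * Q + B * V) / m := by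
    rw [DeltaF, hfrob]; rw [inv_mul_eq_div]
  have hDD : DeltaDist x d ξ γ = (m * A + B * V) / m := by
    rw [DeltaDist]
    have h1 : enormSq (ξ - xStar x d) = A := by
      simp only [hA, enormSq]; rfl
    have h2 : enormSq (xStar x d) = B := rfl
    have h3 : enormSq (γ - dStar d) = V := by
      simp only [hV, enormSq]; rfl
    rw [h1, h2, h3]; field_simp
  -- nonnegativity
  have hA0 : 0 ≤ A := Finset.sum_nonneg (fun j _ => sq_nonneg _)
  have hB0 : 0 ≤ B := Finset.sum_nonneg (fun j _ => sq_nonneg _)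
  have hV0 : 0 ≤ V := Finset.sum_nonneg (fun j _ => sq_nonneg _)
  have hE0 : 0 ≤ E := Finset.sum_nonneg (fun j _ => sq_nonneg _)
  -- Cauchy-Schwarz
  have hCS1 : P^2 ≤ A * B := Finset.sum_mul_sq_le_sq_mul_sq _ _ _
  have hCS2 : Q^2 ≤ E * V := Finset.sum_mul_sq_le_sq_mul_sq _ _ _
  -- E ≤ m ρ²
  have hEle : E ≤ m * ρ^2 := by
    have : ∀ i : Fin m, (γ i - 1)^2 ≤ ρ^2 := by
      intro i
      have := hγ.2 i
      calc (γ i - 1)^2 = |γ i - 1|^2 := (sq_abs _).symm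
        _ ≤ ρ^2 := by
            apply pow_le_pow_left₀ (abs_nonneg _) this
    calc E ≤ ∑ _i : Fin m, ρ^2 := Finset.sum_le_sum (fun i _ => this i)
      _ = m * ρ^2 := by
          rw [Finset.sum_const, Finset.card_univ, Fintype.card_fin, nsmul_eq_mul]
  -- key bound on cross term
  have hcross : |2 * P * Q| ≤ ρ * (m * A + B * V) := by
    apply abs_le_of_sq_le_sq
    · have h1 : (2 * P * Q)^2 = 4 * (P^2 * Q^2) := by ring
      have h2 : P^2 * Q^2 ≤ (A * B) * (E * V) :=
        mul_le_mul hCS1 hCS2 (sq_nonneg _) (by positivity)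
      have h3 : (A * B) * (E * V) ≤ (A * B) * ((m * ρ^2) * V) := by
        apply mul_le_mul_of_nonneg_left _ (by positivity)
        exact mul_le_mul_of_nonneg_right hEle hV0
      have h4 : (ρ * (m * A + B * V))^2 - 4 * ((A * B) * ((m * ρ^2) * V))
          = ρ^2 * (m * A - B * V)^2 := by ring
      nlinarith [sq_nonneg (m * A - B * V), sq_nonneg ρ]
    · positivity
  obtain ⟨hcl, hcr⟩ := abs_le.mp hcross
  have key1 : (1 - ρ) * (m * A + B * V) ≤ A * (E + m) + 2 * P * Q + B * V := by
    nlinarith [mul_nonneg hA0 hE0, hcl]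
  have hAE : A * E ≤ ρ * (m * A) := by
    calc A * E ≤ A * (m * ρ^2) := mul_le_mul_of_nonneg_left hEle hA0
      _ ≤ ρ * (m * A) := by nlinarith [mul_nonneg (mul_nonneg hρ0.le hm'.le) hA0]
  have key2 : A * (E + m) + 2 * P * Q + B * V ≤ (1 + 2 * ρ) * (m * A + B * V) := by
    nlinarith [hcr, hAE, mul_nonneg (mul_nonneg hρ0.le hB0) hV0]
  constructor
  · rw [hDF, hDD, ← mul_div_assoc, div_le_div_iff₀ hm' hm']
    exact mul_le_mul_of_nonneg_right key1 hm'.le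
  · rw [hDF, hDD, ← mul_div_assoc, div_le_div_iff₀ hm' hm']
    exact mul_le_mul_of_nonneg_right key2 hm'.le
end
end

section
/- Expected signal gradient: If each row a_{i,l} is a centred isotropic random vector (E a_{i,l} = 0 and E a_{i,l} a_{i,l}ᵀ = I_n), then for all ξ ∈ ℝⁿ and γ ∈ ℝ^m, E ∇_ξ f(ξ,γ) = (1/m) [‖γ‖₂² ξ − (γᵀ d) x]. -/
noncomputable section
open scoped BigOperators
open MeasureTheory ProbabilityTheory

/-- Euclidean norm ‖v‖₂ -/
noncomputable def enorm {n : ℕ} (v : Fin n → ℝ) : ℝ := Real.sqrt (enormSq v)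

/-- sup norm ‖v‖_∞ -/
noncomputable def supNorm {n : ℕ} (v : Fin n → ℝ) : ℝ := ⨆ j, |v j|

/-- the neighbourhood D_{κ,ρ} = {(ξ,γ) ∈ ℝⁿ × C_ρ : Δ(ξ,γ) ≤ κ²‖x*‖₂²} -/
def Dset {n m : ℕ} (x : Fin n → ℝ) (d : Fin m → ℝ) (κ ρ : ℝ) :
    Set ((Fin n → ℝ) × (Fin m → ℝ)) :=
  {q | q.2 ∈ Cset m ρ ∧ DeltaDist x d q.1 q.2 ≤ κ ^ 2 * enormSq (xStar x d)}

/-- residual γ̄ A ξ − d̄ A x -/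
def resid {n m : ℕ} (A : Matrix (Fin m) (Fin n) ℝ) (x : Fin n → ℝ) (d : Fin m → ℝ)
    (ξ : Fin n → ℝ) (γ : Fin m → ℝ) : Fin m → ℝ :=
  fun i => γ i * (A.mulVec ξ) i - d i * (A.mulVec x) i

/-- the objective f(ξ,γ) = (1/(2mp)) Σ_l ‖γ̄A_lξ − d̄A_lx‖₂² -/
def objF {n m p : ℕ} (A : Fin p → Matrix (Fin m) (Fin n) ℝ) (x : Fin n → ℝ) (d : Fin m → ℝ)
    (ξ : Fin n → ℝ) (γ : Fin m → ℝ) : ℝ :=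
  (2 * m * p : ℝ)⁻¹ * ∑ l, enormSq (resid (A l) x d ξ γ)

/-- the signal gradient ∇_ξ f(ξ,γ) = (1/(mp)) Σ_l A_lᵀ γ̄ (γ̄A_lξ − d̄A_lx) -/
def gradXi {n m p : ℕ} (A : Fin p → Matrix (Fin m) (Fin n) ℝ) (x : Fin n → ℝ) (d : Fin m → ℝ)
    (ξ : Fin n → ℝ) (γ : Fin m → ℝ) : Fin n → ℝ :=
  fun j => (m * p : ℝ)⁻¹ * ∑ l, ∑ i, A l i j * (γ i * resid (A l) x d ξ γ i)

/-- the gain gradient ∇_γ f(ξ,γ) = (1/(mp)) Σ_l diag(A_lξ)(γ̄A_lξ − d̄A_lx) -/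
def gradGamma {n m p : ℕ} (A : Fin p → Matrix (Fin m) (Fin n) ℝ) (x : Fin n → ℝ) (d : Fin m → ℝ)
    (ξ : Fin n → ℝ) (γ : Fin m → ℝ) : Fin m → ℝ :=
  fun i => (m * p : ℝ)⁻¹ * ∑ l, (A l).mulVec ξ i * resid (A l) x d ξ γ i

/-- the projected gain gradient ∇⊥_γ f = (I_m − (1/m)1_m1_mᵀ) ∇_γ f -/
def gradGammaPerp {n m p : ℕ} (A : Fin p → Matrix (Fin m) (Fin n) ℝ) (x : Fin n → ℝ)
    (d : Fin m → ℝ) (ξ : Fin n → ℝ) (γ : Fin m → ℝ) : Fin m → ℝ :=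
  fun i => gradGamma A x d ξ γ i - (m : ℝ)⁻¹ * ∑ i', gradGamma A x d ξ γ i'

/- Row `i` of the residual `γ̄A_lξ − d̄A_lx` is the linear form `a_{i,l} ⬝ᵥ (γᵢ ξ - dᵢ x)`, so
coordinate `j` of `A_lᵀ γ̄ (γ̄A_lξ − d̄A_lx)` is `Σᵢ γᵢ a_{i,l,j} (a_{i,l} ⬝ᵥ (γᵢ ξ - dᵢ x))`.
Isotropy gives `E[a_j (a ⬝ᵥ v)] = v_j`, so each `l` contributes `‖γ‖² ξ_j - (γᵀd) x_j`. -/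

section Isotropic

variable {Ω : Type*} [MeasurableSpace Ω] {μ : Measure Ω} {n : ℕ} {a : Ω → Fin n → ℝ}

theorem integrable_mul_dotProduct (hInt : ∀ j k, Integrable (fun ω => a ω j * a ω k) μ)
    (v : Fin n → ℝ) (j : Fin n) : Integrable (fun ω => a ω j * (a ω ⬝ᵥ v)) μ := by
  simp only [dotProduct, Finset.mul_sum, ← mul_assoc]
  exact integrable_finsetSum _ fun k _ => (hInt j k).mul_const (v k)

theorem integral_mul_dotProduct_of_isotropic
    (hInt : ∀ j k, Integrable (fun ω => a ω j * a ω k) μ)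
    (hCov : ∀ j k, ∫ ω, a ω j * a ω k ∂μ = if j = k then (1 : ℝ) else 0)
    (v : Fin n → ℝ) (j : Fin n) : ∫ ω, a ω j * (a ω ⬝ᵥ v) ∂μ = v j := by
  simp only [dotProduct, Finset.mul_sum, ← mul_assoc]
  rw [integral_finsetSum _ fun k _ => (hInt j k).mul_const (v k)]
  simp [integral_mul_const, hCov]

end Isotropic

theorem resid_apply {n m : ℕ} (M : Matrix (Fin m) (Fin n) ℝ) (x : Fin n → ℝ) (d : Fin m → ℝ)
    (ξ : Fin n → ℝ) (γ : Fin m → ℝ) (i : Fin m) :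
    resid M x d ξ γ i = M i ⬝ᵥ (γ i • ξ - d i • x) := by
  simp only [resid, dotProduct_sub, dotProduct_smul, smul_eq_mul]
  rfl

section ResidualMoments

variable {Ω : Type*} [MeasurableSpace Ω] {μ : Measure Ω} {n m : ℕ}
  {M : Ω → Matrix (Fin m) (Fin n) ℝ}

theorem integrable_mul_mul_resid
    (hInt : ∀ i j k, Integrable (fun ω => M ω i j * M ω i k) μ)
    (x : Fin n → ℝ) (d : Fin m → ℝ) (ξ : Fin n → ℝ) (γ : Fin m → ℝ) (i : Fin m) (j : Fin n) :
    Integrable (fun ω => M ω i j * (γ i * resid (M ω) x d ξ γ i)) μ := by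
  simp only [resid_apply, mul_left_comm (M _ i j)]
  exact (integrable_mul_dotProduct (hInt i) _ j).const_mul (γ i)

theorem integral_transpose_mul_diag_resid_of_isotropic
    (hInt : ∀ i j k, Integrable (fun ω => M ω i j * M ω i k) μ)
    (hCov : ∀ i j k, ∫ ω, M ω i j * M ω i k ∂μ = if j = k then (1 : ℝ) else 0)
    (x : Fin n → ℝ) (d : Fin m → ℝ) (ξ : Fin n → ℝ) (γ : Fin m → ℝ) (j : Fin n) :
    ∫ ω, ∑ i, M ω i j * (γ i * resid (M ω) x d ξ γ i) ∂μ =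
      enormSq γ * ξ j - (∑ i, γ i * d i) * x j := by
  have hrow : ∀ i, ∫ ω, M ω i j * (γ i * resid (M ω) x d ξ γ i) ∂μ =
      γ i * (γ i * ξ j - d i * x j) := fun i => by
    simp only [resid_apply, mul_left_comm (M _ i j)]
    rw [integral_const_mul, integral_mul_dotProduct_of_isotropic (hInt i) (hCov i)]
    simp
  rw [integral_finsetSum _ fun i _ => integrable_mul_mul_resid hInt x d ξ γ i j]
  simp only [hrow, enormSq, Finset.sum_mul, ← Finset.sum_sub_distrib]
  exact Finset.sum_congr rfl fun i _ => by ring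

end ResidualMoments

theorem expected_signal_gradient_general {Ω : Type*} [MeasureSpace Ω]
    {n m p : ℕ} (hp : 0 < p)
    (A : Fin p → Ω → Matrix (Fin m) (Fin n) ℝ)
    (hInt : ∀ l i j j', Integrable (fun ω => A l ω i j * A l ω i j') ℙ)
    (hCov : ∀ l i j j', ∫ ω, A l ω i j * A l ω i j' = if j = j' then (1 : ℝ) else 0)
    (x : Fin n → ℝ) (d : Fin m → ℝ) (ξ : Fin n → ℝ) (γ : Fin m → ℝ) :
    ∀ j, (∫ ω, gradXi (fun l => A l ω) x d ξ γ j) =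
      (m : ℝ)⁻¹ * (enormSq γ * ξ j - (∑ i, γ i * d i) * x j) := by
  intro j
  have hp' : (p : ℝ) ≠ 0 := Nat.cast_ne_zero.mpr hp.ne'
  unfold gradXi
  rw [integral_const_mul, integral_finsetSum _ fun l _ =>
    integrable_finsetSum _ fun i _ => integrable_mul_mul_resid (hInt l) x d ξ γ i j]
  simp only [integral_transpose_mul_diag_resid_of_isotropic (hInt _) (hCov _),
    Finset.sum_const, Finset.card_univ, Fintype.card_fin, nsmul_eq_mul]
  rw [mul_inv, mul_assoc, inv_mul_cancel_left₀ hp']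

/-- **Expected signal gradient.**
If each row a_{i,l} is centred isotropic, then E ∇_ξ f(ξ,γ) = (1/m)[‖γ‖₂² ξ − (γᵀd) x]. -/
theorem expected_signal_gradient {Ω : Type*} [MeasureSpace Ω]
    [IsProbabilityMeasure (ℙ : Measure Ω)]
    {n m p : ℕ} (hn : 0 < n) (hm : 0 < m) (hp : 0 < p)
    (A : Fin p → Ω → Matrix (Fin m) (Fin n) ℝ)
    (hMeas : ∀ l i j, Measurable fun ω => A l ω i j)
    (hIndep : iIndepFun
      (fun (q : Fin m × Fin p) ω => (fun j => A q.2 ω q.1 j)) ℙ)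
    (hInt : ∀ l i j j', Integrable (fun ω => A l ω i j * A l ω i j') ℙ)
    (hMean : ∀ l i j, ∫ ω, A l ω i j = 0)
    (hCov : ∀ l i j j', ∫ ω, A l ω i j * A l ω i j' = if j = j' then (1 : ℝ) else 0)
    (x : Fin n → ℝ) (d : Fin m → ℝ) (ξ : Fin n → ℝ) (γ : Fin m → ℝ) :
    ∀ j, (∫ ω, gradXi (fun l => A l ω) x d ξ γ j) =
      (m : ℝ)⁻¹ * (enormSq γ * ξ j - (∑ i, γ i * d i) * x j) :=
  expected_signal_gradient_general hp A hInt hCov x d ξ γ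
end
end

section
/- Expected projected gain gradient: Assume each row a_{i,l} is a centred isotropic random vector (E a_{i,l} = 0 and E a_{i,l} a_{i,l}ᵀ = I_n). Write γ = 1_m + ε and d* = 1_m + ω with ε, ω ∈ 1⊥_m (possible since 1_mᵀγ = m and 1_mᵀd* = m). Then E ∇⊥_γ f(ξ,γ) = (1/m) [‖ξ‖₂² ε − (ξᵀ x*) ω]. -/
noncomputable section
open scoped BigOperators
open MeasureTheory ProbabilityTheory

/-! Since f is quadratic in the rows, only second moments of the rows enter the expected gradient:
for an isotropic row a, E[(aᵀu)(aᵀv)] = uᵀv, so E ∇_γ f = (1/m)(‖ξ‖₂² γ − (ξᵀx) d). Projecting onto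
1⊥_m turns γ into γ − 1_m and d into (‖d‖₁/m)(d* − 1_m), and (‖d‖₁/m) ξᵀx = ξᵀx*. -/

section IsotropicRow

variable {Ω ι : Type*} [MeasurableSpace Ω] [Fintype ι] {μ : Measure Ω} {a : Ω → ι → ℝ}

lemma dotProduct_mul_dotProduct_eq_sum (b u v : ι → ℝ) :
    (b ⬝ᵥ u) * (b ⬝ᵥ v) = ∑ j, ∑ j', (u j * v j') * (b j * b j') := by
  simp only [dotProduct, Finset.sum_mul_sum]
  exact Finset.sum_congr rfl fun j _ => Finset.sum_congr rfl fun j' _ => by ring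

lemma integrable_dotProduct_mul_dotProduct
    (hInt : ∀ j j', Integrable (fun ω => a ω j * a ω j') μ) (u v : ι → ℝ) :
    Integrable (fun ω => (a ω ⬝ᵥ u) * (a ω ⬝ᵥ v)) μ := by
  simp only [dotProduct_mul_dotProduct_eq_sum]
  exact integrable_finsetSum _ fun j _ => integrable_finsetSum _ fun j' _ =>
    (hInt j j').const_mul _

lemma integral_dotProduct_mul_dotProduct [DecidableEq ι]
    (hInt : ∀ j j', Integrable (fun ω => a ω j * a ω j') μ)
    (hCov : ∀ j j', ∫ ω, a ω j * a ω j' ∂μ = if j = j' then (1 : ℝ) else 0) (u v : ι → ℝ) :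
    ∫ ω, (a ω ⬝ᵥ u) * (a ω ⬝ᵥ v) ∂μ = u ⬝ᵥ v := by
  simp only [dotProduct_mul_dotProduct_eq_sum]
  rw [integral_finsetSum _ fun j _ => integrable_finsetSum _ fun j' _ =>
    (hInt j j').const_mul _]
  simp_rw [integral_finsetSum _ fun j' _ => (hInt _ j').const_mul _, integral_const_mul, hCov,
    mul_ite, mul_one, mul_zero, Finset.sum_ite_eq, Finset.mem_univ, if_true]
  rfl

end IsotropicRow

lemma enormSq_eq_dotProduct {n : ℕ} (v : Fin n → ℝ) : enormSq v = v ⬝ᵥ v := by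
  simp only [enormSq, dotProduct, sq]

lemma dotProduct_xStar {n m : ℕ} (ξ x : Fin n → ℝ) (d : Fin m → ℝ) :
    ∑ j, ξ j * xStar x d j = dOne d / m * (ξ ⬝ᵥ x) := by
  simp only [xStar, dotProduct, Finset.mul_sum]
  exact Finset.sum_congr rfl fun j _ => by ring

lemma mulVec_mul_resid {n m : ℕ} (B : Matrix (Fin m) (Fin n) ℝ) (x ξ : Fin n → ℝ)
    (d γ : Fin m → ℝ) (i : Fin m) :
    B.mulVec ξ i * resid B x d ξ γ i
      = γ i * ((B i ⬝ᵥ ξ) * (B i ⬝ᵥ ξ)) - d i * ((B i ⬝ᵥ ξ) * (B i ⬝ᵥ x)) := by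
  simp only [resid, Matrix.mulVec]
  ring

section GainGradient

variable {Ω : Type*} [MeasurableSpace Ω] {μ : Measure Ω} {n m : ℕ} {i : Fin m}
  (x : Fin n → ℝ) (d : Fin m → ℝ) (ξ : Fin n → ℝ) (γ : Fin m → ℝ)

lemma integrable_mulVec_mul_resid {B : Ω → Matrix (Fin m) (Fin n) ℝ}
    (hInt : ∀ j j', Integrable (fun ω => B ω i j * B ω i j') μ) :
    Integrable (fun ω => (B ω).mulVec ξ i * resid (B ω) x d ξ γ i) μ := by
  simp only [mulVec_mul_resid]
  exact ((integrable_dotProduct_mul_dotProduct hInt ξ ξ).const_mul _).sub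
    ((integrable_dotProduct_mul_dotProduct hInt ξ x).const_mul _)

lemma integral_mulVec_mul_resid {B : Ω → Matrix (Fin m) (Fin n) ℝ}
    (hInt : ∀ j j', Integrable (fun ω => B ω i j * B ω i j') μ)
    (hCov : ∀ j j', ∫ ω, B ω i j * B ω i j' ∂μ = if j = j' then (1 : ℝ) else 0) :
    ∫ ω, (B ω).mulVec ξ i * resid (B ω) x d ξ γ i ∂μ
      = γ i * (ξ ⬝ᵥ ξ) - d i * (ξ ⬝ᵥ x) := by
  simp only [mulVec_mul_resid]
  rw [integral_sub ((integrable_dotProduct_mul_dotProduct hInt ξ ξ).const_mul _)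
    ((integrable_dotProduct_mul_dotProduct hInt ξ x).const_mul _),
    integral_const_mul, integral_const_mul, integral_dotProduct_mul_dotProduct hInt hCov,
    integral_dotProduct_mul_dotProduct hInt hCov]

variable {p : ℕ} {A : Fin p → Ω → Matrix (Fin m) (Fin n) ℝ}

lemma integrable_gradGamma (hInt : ∀ l j j', Integrable (fun ω => A l ω i j * A l ω i j') μ) :
    Integrable (fun ω => gradGamma (fun l => A l ω) x d ξ γ i) μ :=
  (integrable_finsetSum _ fun l _ => integrable_mulVec_mul_resid x d ξ γ (hInt l)).const_mul _

lemma integral_gradGamma (hp : 0 < p)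
    (hInt : ∀ l j j', Integrable (fun ω => A l ω i j * A l ω i j') μ)
    (hCov : ∀ l j j', ∫ ω, A l ω i j * A l ω i j' ∂μ = if j = j' then (1 : ℝ) else 0) :
    ∫ ω, gradGamma (fun l => A l ω) x d ξ γ i ∂μ
      = (m : ℝ)⁻¹ * (γ i * (ξ ⬝ᵥ ξ) - d i * (ξ ⬝ᵥ x)) := by
  have hp' : (p : ℝ) ≠ 0 := by positivity
  simp only [gradGamma]
  rw [integral_const_mul,
    integral_finsetSum _ fun l _ => integrable_mulVec_mul_resid x d ξ γ (hInt l)]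
  simp only [integral_mulVec_mul_resid x d ξ γ (hInt _) (hCov _), Finset.sum_const,
    Finset.card_univ, Fintype.card_fin, nsmul_eq_mul]
  field_simp

lemma integral_gradGammaPerp
    (hg : ∀ i, Integrable (fun ω => gradGamma (fun l => A l ω) x d ξ γ i) μ) (i : Fin m) :
    ∫ ω, gradGammaPerp (fun l => A l ω) x d ξ γ i ∂μ
      = ∫ ω, gradGamma (fun l => A l ω) x d ξ γ i ∂μ
        - (m : ℝ)⁻¹ * ∑ i', ∫ ω, gradGamma (fun l => A l ω) x d ξ γ i' ∂μ := by
  simp only [gradGammaPerp]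
  rw [integral_sub (hg i) ((integrable_finsetSum _ fun i' _ => hg i').const_mul _),
    integral_const_mul, integral_finsetSum _ fun i' _ => hg i']

end GainGradient

theorem expected_projected_gain_gradient_general {Ω : Type*} [MeasureSpace Ω]
    {n m p : ℕ} (hp : 0 < p)
    (A : Fin p → Ω → Matrix (Fin m) (Fin n) ℝ)
    (hInt : ∀ l i j j', Integrable (fun ω => A l ω i j * A l ω i j') ℙ)
    (hCov : ∀ l i j j', ∫ ω, A l ω i j * A l ω i j' = if j = j' then (1 : ℝ) else 0)
    (x : Fin n → ℝ) (d : Fin m → ℝ) (hd : ∀ i, 0 < d i)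
    (ξ : Fin n → ℝ) (γ : Fin m → ℝ) (hγ : (∑ i, γ i) = m) :
    ∀ i, (∫ ω, gradGammaPerp (fun l => A l ω) x d ξ γ i) =
      (m : ℝ)⁻¹ * (enormSq ξ * (γ i - 1)
        - (∑ j, ξ j * xStar x d j) * (dStar d i - 1)) := by
  intro i
  have hm : (m : ℝ) ≠ 0 := by have := i.pos; positivity
  have hdOne : dOne d ≠ 0 := (Finset.sum_pos (fun i _ => hd i) ⟨i, Finset.mem_univ i⟩).ne'
  have hsum : ∑ i', (m : ℝ)⁻¹ * (γ i' * (ξ ⬝ᵥ ξ) - d i' * (ξ ⬝ᵥ x))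
      = (m : ℝ)⁻¹ * (m * (ξ ⬝ᵥ ξ) - dOne d * (ξ ⬝ᵥ x)) := by
    rw [← Finset.mul_sum, Finset.sum_sub_distrib, ← Finset.sum_mul, ← Finset.sum_mul, hγ, dOne]
  rw [integral_gradGammaPerp x d ξ γ fun i' => integrable_gradGamma x d ξ γ fun l => hInt l i']
  simp only [integral_gradGamma x d ξ γ hp (fun l => hInt l _) (fun l => hCov l _)]
  rw [hsum, enormSq_eq_dotProduct, dotProduct_xStar, dStar]
  field_simp
  ring

/-- **Expected projected gain gradient.**
Writing γ = 1_m + ε and d* = 1_m + ω₀ with ε, ω₀ ∈ 1⊥_m (possible since 1ᵀγ = m and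
1ᵀd* = m), one has E ∇⊥_γ f(ξ,γ) = (1/m)[‖ξ‖₂² ε − (ξᵀx*) ω₀]. -/
theorem expected_projected_gain_gradient {Ω : Type*} [MeasureSpace Ω]
    [IsProbabilityMeasure (ℙ : Measure Ω)]
    {n m p : ℕ} (hn : 0 < n) (hm : 0 < m) (hp : 0 < p)
    (A : Fin p → Ω → Matrix (Fin m) (Fin n) ℝ)
    (hMeas : ∀ l i j, Measurable fun ω => A l ω i j)
    (hIndep : iIndepFun
      (fun (q : Fin m × Fin p) ω => (fun j => A q.2 ω q.1 j)) ℙ)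
    (hInt : ∀ l i j j', Integrable (fun ω => A l ω i j * A l ω i j') ℙ)
    (hMean : ∀ l i j, ∫ ω, A l ω i j = 0)
    (hCov : ∀ l i j j', ∫ ω, A l ω i j * A l ω i j' = if j = j' then (1 : ℝ) else 0)
    (x : Fin n → ℝ) (d : Fin m → ℝ) (hd : ∀ i, 0 < d i)
    (ξ : Fin n → ℝ) (γ : Fin m → ℝ) (hγ : (∑ i, γ i) = m) :
    ∀ i, (∫ ω, gradGammaPerp (fun l => A l ω) x d ξ γ i) =
      (m : ℝ)⁻¹ * (enormSq ξ * (γ i - 1)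
        - (∑ j, ξ j * xStar x d j) * (dStar d i - 1)) :=
  expected_projected_gain_gradient_general hp A hInt hCov x d hd ξ γ hγ
end
end

section
/- One-step error contraction under the regularity condition: Let η, L > 0 and suppose x* ≠ 0 and that at a point (ξ,γ) the bounded-curvature condition ⟨∇_ξ f(ξ,γ), ξ−x*⟩ + ⟨∇⊥_γ f(ξ,γ), γ−d*⟩ ≥ (η/2) Δ(ξ,γ) and the Lipschitz-gradient condition ‖∇_ξ f(ξ,γ)‖₂² + ‖∇⊥_γ f(ξ,γ)‖₂² ≤ L² Δ(ξ,γ) hold. Let τ := min{1, ‖x*‖₂²/m}, μ > 0, μ_ξ := μ, μ_γ := μ m/‖x*‖₂², ξ₊ := ξ − μ_ξ ∇_ξ f(ξ,γ), γ̲₊ := γ − μ_γ ∇⊥_γ f(ξ,γ). Then Δ(ξ₊, γ̲₊) ≤ (1 − μη + (L²/τ) μ²) Δ(ξ,γ); in particular the distance strictly decreases whenever Δ(ξ,γ) > 0 and μ ∈ (0, τη/L²). -/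
noncomputable section
open scoped BigOperators
open MeasureTheory ProbabilityTheory

lemma enormSq_nonneg {n : ℕ} (v : Fin n → ℝ) : 0 ≤ enormSq v :=
  Finset.sum_nonneg fun _ _ => sq_nonneg _

lemma enormSq_pos {n : ℕ} (v : Fin n → ℝ) (hv : v ≠ 0) : 0 < enormSq v := by
  rcases (enormSq_nonneg v).lt_or_eq with h | h
  · exact h
  · exfalso; apply hv; funext j
    have := (Finset.sum_eq_zero_iff_of_nonneg (fun i _ => sq_nonneg (v i))).mp h.symm j
      (Finset.mem_univ j)
    have := pow_eq_zero_iff (two_ne_zero) |>.mp this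
    simpa using this

lemma enormSq_sub_smul {n : ℕ} (v w : Fin n → ℝ) (t : ℝ) :
    enormSq (v - t • w) = enormSq v - 2 * t * (∑ j, w j * v j) + t ^ 2 * enormSq w := by
  simp only [enormSq, Pi.sub_apply, Pi.smul_apply, smul_eq_mul, Finset.mul_sum,
    ← Finset.sum_sub_distrib, ← Finset.sum_add_distrib]
  exact Finset.sum_congr rfl fun j _ => by ring

/-- **One-step error contraction under the regularity condition.**
If the bounded-curvature and Lipschitz-gradient conditions hold at (ξ,γ), then for
τ := min{1, ‖x*‖₂²/m}, μ_ξ := μ, μ_γ := μ m/‖x*‖₂², the update satisfies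
Δ(ξ₊, γ̲₊) ≤ (1 − μη + (L²/τ) μ²) Δ(ξ,γ); in particular the distance strictly decreases
whenever Δ(ξ,γ) > 0 and μ ∈ (0, τη/L²). -/
theorem one_step_contraction {n m p : ℕ} (hn : 0 < n) (hm : 0 < m) (hp : 0 < p)
    (A : Fin p → Matrix (Fin m) (Fin n) ℝ) (x : Fin n → ℝ) (d : Fin m → ℝ)
    (hd : ∀ i, 0 < d i) (hx : xStar x d ≠ 0)
    (η L : ℝ) (hη : 0 < η) (hL : 0 < L)
    (ξ : Fin n → ℝ) (γ : Fin m → ℝ)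
    (hcurv : (∑ j, gradXi A x d ξ γ j * (ξ j - xStar x d j))
        + (∑ i, gradGammaPerp A x d ξ γ i * (γ i - dStar d i)) ≥
        (η / 2) * DeltaDist x d ξ γ)
    (hlip : enormSq (gradXi A x d ξ γ) + enormSq (gradGammaPerp A x d ξ γ) ≤
        L ^ 2 * DeltaDist x d ξ γ)
    (μ : ℝ) (hμ : 0 < μ) :
    DeltaDist x d (ξ - μ • gradXi A x d ξ γ)
        (γ - (μ * m / enormSq (xStar x d)) • gradGammaPerp A x d ξ γ) ≤
      (1 - μ * η + (L ^ 2 / min 1 (enormSq (xStar x d) / m)) * μ ^ 2) *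
        DeltaDist x d ξ γ ∧
    (0 < DeltaDist x d ξ γ → μ < min 1 (enormSq (xStar x d) / m) * η / L ^ 2 →
      DeltaDist x d (ξ - μ • gradXi A x d ξ γ)
          (γ - (μ * m / enormSq (xStar x d)) • gradGammaPerp A x d ξ γ) <
        DeltaDist x d ξ γ) := by
  classical
  set S := enormSq (xStar x d) with hSdef
  have hS : 0 < S := enormSq_pos _ hx
  have hmR : (0:ℝ) < m := by exact_mod_cast hm
  set c : ℝ := S / m with hcdef
  have hc : 0 < c := div_pos hS hmR
  set τ : ℝ := min 1 c with hτdef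
  have hτ : 0 < τ := lt_min one_pos hc
  set gξ := gradXi A x d ξ γ with hgξ
  set gγ := gradGammaPerp A x d ξ γ with hgγ
  set Δ := DeltaDist x d ξ γ with hΔ
  have hΔ0 : 0 ≤ Δ := by
    have := enormSq_nonneg (ξ - xStar x d)
    have h2 := enormSq_nonneg (γ - dStar d)
    have : 0 ≤ (S / m) * enormSq (γ - dStar d) := mul_nonneg (le_of_lt hc) h2
    simp only [hΔ, DeltaDist]
    positivity
  have hstep : μ * m / S = μ / c := by
    rw [hcdef]; field_simp
  have hrw1 : (ξ - μ • gξ) - xStar x d = (ξ - xStar x d) - μ • gξ := by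
    funext j; simp [Pi.sub_apply]; ring
  have hrw2 : (γ - (μ * m / S) • gγ) - dStar d = (γ - dStar d) - (μ / c) • gγ := by
    rw [hstep]; funext i; simp [Pi.sub_apply]; ring
  set IP := (∑ j, gξ j * (ξ j - xStar x d j)) + (∑ i, gγ i * (γ i - dStar d i)) with hIP
  have key : DeltaDist x d (ξ - μ • gξ) (γ - (μ * m / S) • gγ)
      = Δ - 2 * μ * IP + μ ^ 2 * (enormSq gξ + (1 / c) * enormSq gγ) := by
    simp only [DeltaDist, hrw1, hrw2, enormSq_sub_smul, ← hSdef, hΔ, hIP]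
    have hsub1 : ∀ j, (ξ - xStar x d) j = ξ j - xStar x d j := fun j => rfl
    have hsub2 : ∀ i, (γ - dStar d) i = γ i - dStar d i := fun i => rfl
    simp only [hsub1, hsub2]
    have hc' : c ≠ 0 := ne_of_gt hc
    have hm' : (m:ℝ) ≠ 0 := ne_of_gt hmR
    have hcm : S / (m:ℝ) = c := rfl
    rw [hcm]
    field_simp
    ring
  have hGnn1 : 0 ≤ enormSq gξ := enormSq_nonneg _
  have hGnn2 : 0 ≤ enormSq gγ := enormSq_nonneg _
  have hbound : enormSq gξ + (1 / c) * enormSq gγ ≤ (L ^ 2 / τ) * Δ := by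
    have hτ1 : (1:ℝ) ≤ 1 / τ := by
      rw [le_div_iff₀ hτ, one_mul]; exact min_le_left 1 c
    have h1 : enormSq gξ ≤ (1 / τ) * enormSq gξ := le_mul_of_one_le_left hGnn1 hτ1
    have h2 : (1 / c) * enormSq gγ ≤ (1 / τ) * enormSq gγ := by
      have : 1 / c ≤ 1 / τ := one_div_le_one_div_of_le hτ (min_le_right 1 c)
      exact mul_le_mul_of_nonneg_right this hGnn2
    have h3 : (1 / τ) * (enormSq gξ + enormSq gγ) ≤ (1 / τ) * (L ^ 2 * Δ) :=
      mul_le_mul_of_nonneg_left hlip (by positivity)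
    calc enormSq gξ + (1 / c) * enormSq gγ
        ≤ (1 / τ) * (enormSq gξ + enormSq gγ) := by linarith [h1, h2]; 
      _ ≤ (1 / τ) * (L ^ 2 * Δ) := h3
      _ = (L ^ 2 / τ) * Δ := by ring
  have hIPge : IP ≥ (η / 2) * Δ := hcurv
  have main : DeltaDist x d (ξ - μ • gξ) (γ - (μ * m / S) • gγ)
      ≤ (1 - μ * η + (L ^ 2 / τ) * μ ^ 2) * Δ := by
    rw [key]
    have h1 : 2 * μ * IP ≥ 2 * μ * ((η / 2) * Δ) :=
      mul_le_mul_of_nonneg_left hIPge (by positivity)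
    have h2 : μ ^ 2 * (enormSq gξ + (1 / c) * enormSq gγ) ≤ μ ^ 2 * ((L ^ 2 / τ) * Δ) :=
      mul_le_mul_of_nonneg_left hbound (by positivity)
    nlinarith
  refine ⟨main, fun hΔpos hμsmall => ?_⟩
  have hL2 : (0:ℝ) < L ^ 2 := by positivity
  have hμL : μ * L ^ 2 < τ * η := (lt_div_iff₀ hL2).mp hμsmall
  have hcoef : 1 - μ * η + (L ^ 2 / τ) * μ ^ 2 < 1 := by
    have h : (L ^ 2 / τ) * μ ^ 2 < μ * η := by
      rw [div_mul_eq_mul_div, div_lt_iff₀ hτ]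
      nlinarith [mul_lt_mul_of_pos_left hμL hμ]
    linarith
  calc DeltaDist x d (ξ - μ • gξ) (γ - (μ * m / S) • gγ)
      ≤ (1 - μ * η + (L ^ 2 / τ) * μ ^ 2) * Δ := main
    _ < 1 * Δ := by exact mul_lt_mul_of_pos_right hcoef hΔpos
    _ = Δ := one_mul Δ
end
end
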